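/- Every irreducible continuous unitary representation of a compact Hausdorff topological group on a complex Hilbert space acts on a finite-dimensional space. -/

import Mathlib

/-!
Fix `ξ ≠ 0` and average the rank-one operators `rankOne (π g ξ) (π g ξ)` against the Haar
probability measure. The average `T` is compact (compact operators form a closed convex set),
self-adjoint, nonzero because `⟪ξ, T ξ⟫ = ∫ ‖⟪ξ, π g ξ⟫‖²` is positive near `g = 1`, and it
commutes with every `π g` by left invariance of the measure. By the spectral theorem for compact
self-adjoint operators, `T` has a nonzero eigenvalue with a finite-dimensional eigenspace; that
eigenspace is closed, nonzero and `π`-invariant, hence all of `H` by irreducibility.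
-/

open MeasureTheory InnerProductSpace ContinuousLinearMap Module End ComplexConjugate

theorem isCompactOperator_rankOne {𝕜 E F : Type*} [RCLike 𝕜] [SeminormedAddCommGroup E]
    [NormedSpace 𝕜 E] [SeminormedAddCommGroup F] [InnerProductSpace 𝕜 F] (x : E) (y : F) :
    IsCompactOperator (rankOne 𝕜 x y) := by
  rw [rankOne_def', coe_comp]
  -- despite its name, `_rng` is the lemma for a locally compact *domain*, here `𝕜`
  exact (isCompactOperator_of_locallyCompactSpace_rng _).comp_clm _

theorem ContinuousLinearMap.isSymmetric_integral {α E : Type*} [MeasurableSpace α]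
    {μ : Measure α} [NormedAddCommGroup E] [InnerProductSpace ℂ E] [CompleteSpace E]
    {f : α → E →L[ℂ] E} (hf : Integrable f μ) (h : ∀ a, (f a).IsSymmetric) :
    (∫ a, f a ∂μ).IsSymmetric := by
  intro x y
  simp only [coe_coe, integral_apply hf]
  rw [← inner_conj_symm, ← integral_inner (hf.apply_continuousLinearMap x), ← integral_conj,
    ← integral_inner (hf.apply_continuousLinearMap y)]
  congr 1 with a
  rw [inner_conj_symm]
  exact h a x y

theorem FiniteDimensional.of_irreducible_of_isCompactOperator {𝕜 G H : Type*} [RCLike 𝕜]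
    [Monoid G] [NormedAddCommGroup H] [InnerProductSpace 𝕜 H] [CompleteSpace H]
    (π : G →* (H ≃ₗᵢ[𝕜] H))
    (hirr : ∀ M : Submodule 𝕜 H, IsClosed (M : Set H) →
      (∀ g : G, ∀ m ∈ M, π g m ∈ M) → M = ⊥ ∨ M = ⊤)
    {T : H →L[𝕜] H} (hT : IsCompactOperator T) (hT' : T.IsSymmetric) (hT0 : T ≠ 0)
    (hcomm : ∀ g x, T (π g x) = π g (T x)) : FiniteDimensional 𝕜 H := by
  obtain ⟨μ, hμ, hμ0⟩ : ∃ μ, HasEigenvalue (T : End 𝕜 H) μ ∧ μ ≠ 0 := by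
    by_contra! h
    exact hT0 ((eq_zero_of_forall_hasEigenvalue_eq_zero hT hT').1 h)
  have hfin := finite_dimensional_eigenspace hT μ hμ0
  have hinv : ∀ g, ∀ x ∈ eigenspace (T : End 𝕜 H) μ, π g x ∈ eigenspace (T : End 𝕜 H) μ := by
    intro g x hx
    rw [mem_eigenspace_iff, coe_coe] at hx ⊢
    rw [hcomm, hx, map_smul]
  rcases hirr _ (Submodule.closed_of_finiteDimensional _) hinv with hbot | htop
  · exact absurd hbot hμ
  · rw [htop] at hfin
    exact Module.Finite.equiv (LinearEquiv.ofTop ⊤ rfl)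

section OrbitAverage

variable {G H : Type*} [Group G] [TopologicalSpace G] [CompactSpace G] [MeasurableSpace G]
  [OpensMeasurableSpace G] [NormedAddCommGroup H] [InnerProductSpace ℂ H]
  (μ : Measure G) (π : G →* (H ≃ₗᵢ[ℂ] H)) (ξ : H)

noncomputable def orbitRankOneAverage : H →L[ℂ] H :=
  ∫ g, rankOne ℂ (π g ξ) (π g ξ) ∂μ

variable {μ π ξ}

theorem integrable_rankOne_orbit [IsFiniteMeasure μ] (hπ : Continuous fun g => π g ξ) :
    Integrable (fun g => rankOne ℂ (π g ξ) (π g ξ)) μ := by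
  have hcont : Continuous fun g => rankOne ℂ (π g ξ) (π g ξ) := by
    simp only [rankOne_def]
    fun_prop
  exact hcont.integrable_of_hasCompactSupport (.of_compactSpace _)

theorem orbitRankOneAverage_apply [IsFiniteMeasure μ] (hπ : Continuous fun g => π g ξ) (x : H) :
    orbitRankOneAverage μ π ξ x = ∫ g, inner ℂ (π g ξ) x • π g ξ ∂μ :=
  integral_apply (integrable_rankOne_orbit hπ) x

variable [CompleteSpace H]

theorem isCompactOperator_orbitRankOneAverage [IsProbabilityMeasure μ]
    (hπ : Continuous fun g => π g ξ) :
    IsCompactOperator (orbitRankOneAverage μ π ξ) := by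
  have hconv : Convex ℝ {A : H →L[ℂ] H | IsCompactOperator A} := by
    intro A hA B hB a b _ _ _
    simpa using (hA.smul (a : ℝ)).add (hB.smul (b : ℝ))
  exact hconv.integral_mem isClosed_setOfPred_isCompactOperator
    (.of_forall fun g => isCompactOperator_rankOne _ _) (integrable_rankOne_orbit hπ)

theorem isSymmetric_orbitRankOneAverage [IsFiniteMeasure μ] (hπ : Continuous fun g => π g ξ) :
    (orbitRankOneAverage μ π ξ).IsSymmetric :=
  isSymmetric_integral (integrable_rankOne_orbit hπ) fun _ => isSymmetric_rankOne_self _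

theorem orbitRankOneAverage_map [IsTopologicalGroup G] [BorelSpace G] [IsFiniteMeasure μ]
    [μ.IsMulLeftInvariant] (hπ : Continuous fun g => π g ξ) (g₀ : G) (x : H) :
    orbitRankOneAverage μ π ξ (π g₀ x) = π g₀ (orbitRankOneAverage μ π ξ x) := by
  rw [orbitRankOneAverage_apply hπ, orbitRankOneAverage_apply hπ,
    ← integral_mul_left_eq_self _ g₀]
  refine Eq.trans ?_ ((π g₀).toLinearIsometry.integral_comp_comm _)
  congr 1 with g
  simp [map_mul, LinearIsometryEquiv.inner_map_map]

theorem inner_orbitRankOneAverage_self [IsFiniteMeasure μ] (hπ : Continuous fun g => π g ξ) :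
    inner ℂ ξ (orbitRankOneAverage μ π ξ ξ) = ((∫ g, ‖inner ℂ ξ (π g ξ)‖ ^ 2 ∂μ : ℝ) : ℂ) := by
  rw [orbitRankOneAverage_apply hπ, ← integral_inner, ← integral_complex_ofReal]
  · congr 1 with g
    rw [inner_smul_right, ← inner_conj_symm, RCLike.conj_mul]
    norm_cast
  exact (integrable_rankOne_orbit hπ).apply_continuousLinearMap ξ

theorem orbitRankOneAverage_ne_zero [IsFiniteMeasure μ] [μ.IsOpenPosMeasure]
    (hπ : Continuous fun g => π g ξ) (hξ : ξ ≠ 0) : orbitRankOneAverage μ π ξ ≠ 0 := by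
  intro h0
  have hpos : 0 < ∫ g, ‖inner ℂ ξ (π g ξ)‖ ^ 2 ∂μ := by
    refine Continuous.integral_pos_of_hasCompactSupport_nonneg_nonzero (x := 1) (by fun_prop)
      (.of_compactSpace _) (fun g => by positivity) ?_
    simpa using hξ
  have := inner_orbitRankOneAverage_self (μ := μ) hπ
  rw [h0, zero_apply, inner_zero_right] at this
  exact hpos.ne' (by exact_mod_cast this.symm)

end OrbitAverage

theorem stmt6_general {G : Type*} [Group G] [TopologicalSpace G] [IsTopologicalGroup G]
    [CompactSpace G]
    {H : Type*} [NormedAddCommGroup H] [InnerProductSpace ℂ H] [CompleteSpace H]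
    [Nontrivial H]
    (π : G →* (H ≃ₗᵢ[ℂ] H)) (hπ : ∀ ξ : H, Continuous fun g => π g ξ)
    (hirr : ∀ M : Submodule ℂ H, IsClosed (M : Set H) →
      (∀ g : G, ∀ m ∈ M, π g m ∈ M) → M = ⊥ ∨ M = ⊤) :
    FiniteDimensional ℂ H := by
  obtain ⟨ξ, hξ⟩ := exists_ne (0 : H)
  borelize G
  let μ : Measure G := Measure.haarMeasure ⊤
  have : IsProbabilityMeasure μ := ⟨by
    rw [← TopologicalSpace.PositiveCompacts.coe_top]
    exact Measure.haarMeasure_self⟩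
  exact FiniteDimensional.of_irreducible_of_isCompactOperator π hirr
    (isCompactOperator_orbitRankOneAverage (μ := μ) (hπ ξ))
    (isSymmetric_orbitRankOneAverage (hπ ξ)) (orbitRankOneAverage_ne_zero (hπ ξ) hξ)
    (orbitRankOneAverage_map (hπ ξ))

/-- Every irreducible continuous unitary representation of a compact Hausdorff
topological group on a complex Hilbert space acts on a finite-dimensional
space. -/
theorem stmt6 {G : Type*} [Group G] [TopologicalSpace G] [IsTopologicalGroup G]
    [CompactSpace G] [T2Space G]
    {H : Type*} [NormedAddCommGroup H] [InnerProductSpace ℂ H] [CompleteSpace H]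
    [Nontrivial H]
    (π : G →* (H ≃ₗᵢ[ℂ] H)) (hπ : ∀ ξ : H, Continuous fun g => π g ξ)
    (hirr : ∀ M : Submodule ℂ H, IsClosed (M : Set H) →
      (∀ g : G, ∀ m ∈ M, π g m ∈ M) → M = ⊥ ∨ M = ⊤) :
    FiniteDimensional ℂ H :=
  stmt6_general π hπ hirr
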